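/- Let Γ be a finite simple k-regular graph of girth g and let T(Γ,ρ;Υ) be a generalized truncation. If Υ is connected and each edge of Υ lies on at least one cycle of Υ of length smaller than 2g, then every automorphism of T(Γ,ρ;Υ) leaves the natural partition P_Γ invariant, and consequently the entire automorphism group Aut(T(Γ,ρ;Υ)) projects injectively onto a subgroup of Aut(Γ) (via the map sending g̃ to the permutation g of V(Γ) with (V(Γ̃_u))^{g̃} = V(Γ̃_{u^g})). -/

import Mathlib

/-!
Call a dart `d` of the truncation blue if it joins two fibers (`d.fst.1 ≠ d.snd.1`) and red
otherwise. Every vertex `(u, i)` lies on exactly one blue edge, since `ρ` is a bijection at `u`;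
so two consecutive darts of a closed trail are never both blue, and at most half of its darts
are blue. Projecting the trail to `Γ` gives a closed walk whose length is the number of blue
darts; it is again a trail, because distinct blue edges lie over distinct edges of `Γ`, so if
any dart is blue this number is at least the girth `g`. Hence a closed trail of length `< 2g`
stays in one fiber. An automorphism maps the short cycles through the edges of a fiber to short
cycles, so it maps fiber edges into fibers, and by connectivity of `Υ` whole fibers into fibers.
The induced permutation of `V` preserves adjacency because blue edges go to blue edges. If it is
the identity, the automorphism maps each blue edge to a blue edge between the same two fibers,
i.e. to itself, and so fixes every vertex.
-/

open SimpleGraph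

variable {V W : Type*}

/-- The generalized truncation `T(Γ,ρ;Υ)` of a graph `Γ` by a graph `Υ`,
with respect to a labeling `ρ` of the darts of `Γ` by vertices of `Υ`. -/
def trunc (Γ : SimpleGraph V) (Υ : SimpleGraph W)
    (ρ : ∀ u w : V, Γ.Adj u w → W) : SimpleGraph (V × W) where
  Adj x y := (x.1 = y.1 ∧ Υ.Adj x.2 y.2) ∨
    (∃ h : Γ.Adj x.1 y.1, x.2 = ρ x.1 y.1 h ∧ y.2 = ρ y.1 x.1 h.symm)
  symm := by
    constructor
    rintro ⟨u, i⟩ ⟨w, j⟩ (⟨h1, h2⟩ | ⟨h, h1, h2⟩)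
    · exact Or.inl ⟨h1.symm, h2.symm⟩
    · exact Or.inr ⟨h.symm, h2, h1⟩
  loopless := by
    constructor
    rintro ⟨u, i⟩ (⟨_, h⟩ | ⟨h, _⟩)
    · exact Υ.loopless.irrefl _ h
    · exact Γ.loopless.irrefl _ h

/-- `ρ` is a vertex-neighborhood labeling of `Γ`: for every vertex `u`, the restriction
of `ρ` to the darts emanating from `u` is a bijection onto the vertex set of `Υ`. -/
def IsVNLabeling (Γ : SimpleGraph V) (ρ : ∀ u w : V, Γ.Adj u w → W) : Prop :=
  ∀ u : V, ∀ i : W, ∃! w : V, ∃ h : Γ.Adj u w, ρ u w h = i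

/-- A permutation of the vertices is an automorphism of the graph. -/
def IsAut (Γ : SimpleGraph V) (π : Equiv.Perm V) : Prop :=
  ∀ a b : V, Γ.Adj (π a) (π b) ↔ Γ.Adj a b

/-- The automorphism group of a graph, as a subgroup of the symmetric group. -/
def autG (Γ : SimpleGraph V) : Subgroup (Equiv.Perm V) where
  carrier := {π | IsAut Γ π}
  one_mem' := by intro a b; rfl
  mul_mem' := by
    intro f g hf hg a b
    exact (hf (g a) (g b)).trans (hg a b)
  inv_mem' := by
    intro f hf a b
    conv_rhs => rw [← f.apply_symm_apply a, ← f.apply_symm_apply b]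
    exact (hf _ _).symm


namespace List

variable {α : Type*} {p : α → Bool}

theorem two_mul_countP_add_le_of_isChain_cons {a : α} {l : List α}
    (h : (a :: l).IsChain fun x y => ¬(p x ∧ p y)) :
    2 * l.countP p + (if p a then 1 else 0) ≤ l.length + 1 := by
  induction l generalizing a with
  | nil => split <;> simp
  | cons b l ih =>
    rw [isChain_cons_cons] at h
    have := ih h.2
    rw [countP_cons, length_cons]
    cases ha : p a <;> cases hb : p b <;> simp_all <;> omega

/-- `a :: l` with `l` ending in `a` lists a cyclic sequence, closed up at `a`. -/
theorem two_mul_countP_le_of_isChain_cons_of_getLast? {a : α} {l : List α}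
    (h : (a :: l).IsChain fun x y => ¬(p x ∧ p y)) (hl : l.getLast? = some a) :
    2 * l.countP p ≤ l.length := by
  cases ha : p a
  · obtain ⟨l', rfl⟩ := getLast?_eq_some_iff.mp hl
    have := two_mul_countP_add_le_of_isChain_cons (h.prefix (prefix_append (a :: l') [a]))
    simp [ha] at this ⊢
    omega
  · simpa [ha] using two_mul_countP_add_le_of_isChain_cons h

end List

namespace SimpleGraph.Walk

variable {G : SimpleGraph V}

theorem IsTrail.symm_notMem_darts {u v : V} {p : G.Walk u v} (hp : p.IsTrail) {d : G.Dart}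
    (hd : d ∈ p.darts) : d.symm ∉ p.darts := fun hd' =>
  d.symm_ne (List.inj_on_of_nodup_map hp.edges_nodup hd' hd d.edge_symm)

theorem IsTrail.isChain_cons_lastDart {u : V} {c : G.Walk u u} (hc : c.IsTrail)
    (hnil : ¬c.Nil) :
    (c.lastDart hnil :: c.darts).IsChain fun d d' => G.DartAdj d d' ∧ d' ≠ d.symm := by
  have hmem : ∀ d ∈ c.lastDart hnil :: c.darts, d ∈ c.darts := by
    simp [c.lastDart_mem_darts hnil]
  refine (isChain_dartAdj_cons_darts (d := c.lastDart hnil) rfl c).imp_of_mem_imp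
    fun d d' hd hd' hadj => ⟨hadj, fun h => hc.symm_notMem_darts (hmem d hd) ?_⟩
  exact h ▸ hmem d' hd'

end SimpleGraph.Walk

variable {Γ : SimpleGraph V} {Υ : SimpleGraph W} {ρ : ∀ u w : V, Γ.Adj u w → W}

theorem trunc_adj_of_fst_ne {x y : V × W} (h : (trunc Γ Υ ρ).Adj x y) (hne : x.1 ≠ y.1) :
    ∃ h : Γ.Adj x.1 y.1, x.2 = ρ x.1 y.1 h ∧ y.2 = ρ y.1 x.1 h.symm :=
  h.resolve_left fun h' => hne h'.1

theorem trunc_dart_eq_symm (hρ : IsVNLabeling Γ ρ) {d d' : (trunc Γ Υ ρ).Dart}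
    (hadj : (trunc Γ Υ ρ).DartAdj d d') (hd : d.fst.1 ≠ d.snd.1)
    (hd' : d'.fst.1 ≠ d'.snd.1) : d' = d.symm := by
  obtain ⟨⟨⟨a, i⟩, ⟨m, j⟩⟩, h⟩ := d
  obtain ⟨⟨⟨m', j'⟩, ⟨b, k⟩⟩, h'⟩ := d'
  obtain ⟨rfl, rfl⟩ := Prod.ext_iff.mp hadj
  obtain ⟨ham, hi, hj⟩ := trunc_adj_of_fst_ne h hd
  obtain ⟨hmb, hj', hk⟩ := trunc_adj_of_fst_ne h' hd'
  dsimp only at ham hi hj hmb hj' hk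
  obtain rfl : a = b := (hρ m j).unique ⟨ham.symm, hj.symm⟩ ⟨hmb, hj'.symm⟩
  exact Dart.ext _ _ (Prod.ext rfl (Prod.ext rfl (hk.trans hi.symm)))

theorem trunc_two_mul_countP_le_length [DecidableEq V] (hρ : IsVNLabeling Γ ρ) {x : V × W}
    {c : (trunc Γ Υ ρ).Walk x x} (hc : c.IsTrail) :
    2 * c.darts.countP (fun d => d.fst.1 ≠ d.snd.1) ≤ c.length := by
  rw [← c.length_darts]
  by_cases hnil : c.Nil
  · simp [Walk.darts_eq_nil.mpr hnil]
  refine List.two_mul_countP_le_of_isChain_cons_of_getLast?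
    ((hc.isChain_cons_lastDart hnil).imp ?_) ?_
  · rintro d d' ⟨hadj, hne⟩ ⟨hd, hd'⟩
    exact hne (trunc_dart_eq_symm hρ hadj (by simpa using hd) (by simpa using hd'))
  · rw [List.getLast?_eq_some_getLast (Walk.darts_eq_nil.not.mpr hnil),
      Walk.getLast_darts_eq_lastDart]

theorem trunc_edge_eq_of_map_fst_eq {d d' : (trunc Γ Υ ρ).Dart} (hd : d.fst.1 ≠ d.snd.1)
    (hd' : d'.fst.1 ≠ d'.snd.1) (h : d.edge.map Prod.fst = d'.edge.map Prod.fst) :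
    d.edge = d'.edge := by
  obtain ⟨⟨⟨a, i⟩, ⟨b, j⟩⟩, hab⟩ := d
  obtain ⟨⟨⟨a', i'⟩, ⟨b', j'⟩⟩, hab'⟩ := d'
  obtain ⟨_, hi, hj⟩ := trunc_adj_of_fst_ne hab hd
  obtain ⟨_, hi', hj'⟩ := trunc_adj_of_fst_ne hab' hd'
  dsimp only at hi hj hi' hj'
  simp only [Dart.edge_mk, Sym2.map_mk] at h ⊢
  rcases Sym2.eq_iff.mp h with ⟨rfl, rfl⟩ | ⟨rfl, rfl⟩
  · rw [hi, hj, hi', hj']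
  · rw [hi, hj, hi', hj', Sym2.eq_swap]

section Projection

variable [DecidableEq V]

noncomputable def projWalk : ∀ {x y : V × W}, (trunc Γ Υ ρ).Walk x y → Γ.Walk x.1 y.1
  | _, _, .nil => .nil
  | x, _, .cons (v := z) h p =>
    if hxz : x.1 = z.1 then (projWalk p).copy hxz.symm rfl
    else .cons (trunc_adj_of_fst_ne h hxz).fst (projWalk p)

theorem projWalk_edges {x y : V × W} (p : (trunc Γ Υ ρ).Walk x y) :
    (projWalk p).edges =
      (p.darts.filter fun d => d.fst.1 ≠ d.snd.1).map fun d => d.edge.map Prod.fst := by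
  induction p with
  | nil => rfl
  | @cons x z y h p ih => by_cases hxz : x.1 = z.1 <;> simp [projWalk, hxz, ih]

theorem projWalk_length {x y : V × W} (p : (trunc Γ Υ ρ).Walk x y) :
    (projWalk p).length = p.darts.countP fun d => d.fst.1 ≠ d.snd.1 := by
  rw [← Walk.length_edges, projWalk_edges, List.length_map, List.countP_eq_length_filter]

theorem isTrail_projWalk {x y : V × W} {p : (trunc Γ Υ ρ).Walk x y} (hp : p.IsTrail) :
    (projWalk p).IsTrail := by
  rw [Walk.isTrail_def, projWalk_edges]
  have hblue : ((p.darts.filter fun d => d.fst.1 ≠ d.snd.1).map Dart.edge).Nodup :=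
    hp.edges_nodup.sublist (List.filter_sublist.map _)
  have := hblue.map_on (f := Sym2.map Prod.fst) fun e he e' he' h => by
    obtain ⟨d, hd, rfl⟩ := List.mem_map.mp he
    obtain ⟨d', hd', rfl⟩ := List.mem_map.mp he'
    exact trunc_edge_eq_of_map_fst_eq (by simpa using (List.mem_filter.mp hd).2)
      (by simpa using (List.mem_filter.mp hd').2) h
  simpa [List.map_map, Function.comp_def] using this

theorem trunc_egirth_le_countP {x : V × W} {c : (trunc Γ Υ ρ).Walk x x} (hc : c.IsTrail)
    (hblue : ∃ d ∈ c.darts, d.fst.1 ≠ d.snd.1) :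
    Γ.egirth ≤ c.darts.countP fun d => d.fst.1 ≠ d.snd.1 := by
  have hpos : 0 < c.darts.countP fun d => d.fst.1 ≠ d.snd.1 :=
    List.countP_pos_iff.mpr (by simpa using hblue)
  have hcirc : (projWalk c).IsCircuit := by
    refine ⟨isTrail_projWalk hc, fun h => ?_⟩
    have := projWalk_length c
    rw [h, Walk.length_nil] at this
    omega
  simpa [projWalk_length] using hcirc.egirth_le_length

end Projection

theorem trunc_two_mul_egirth_le_length (hρ : IsVNLabeling Γ ρ) {x : V × W}
    {c : (trunc Γ Υ ρ).Walk x x} (hc : c.IsTrail)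
    (hblue : ∃ d ∈ c.darts, d.fst.1 ≠ d.snd.1) : 2 * Γ.egirth ≤ c.length := by
  classical
  calc 2 * Γ.egirth ≤ 2 * (c.darts.countP fun d => d.fst.1 ≠ d.snd.1 : ℕ) :=
        by gcongr; exact trunc_egirth_le_countP hc hblue
    _ ≤ c.length := by exact_mod_cast trunc_two_mul_countP_le_length hρ hc

theorem trunc_fst_eq_of_mem_edges (hρ : IsVNLabeling Γ ρ) {x : V × W}
    {c : (trunc Γ Υ ρ).Walk x x} (hc : c.IsTrail) (hlen : c.length < 2 * Γ.egirth)
    {y z : V × W} (he : s(y, z) ∈ c.edges) : y.1 = z.1 := by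
  by_contra hyz
  obtain ⟨d, hd, hde⟩ := List.mem_map.mp he
  have hblue : d.fst.1 ≠ d.snd.1 := by
    rcases dart_edge_eq_mk'_iff.mp hde with h | h <;>
      simp only [Prod.ext_iff] at h <;> grind
  exact (trunc_two_mul_egirth_le_length hρ hc ⟨d, hd, hblue⟩).not_gt hlen

variable (Υ ρ) in
def truncFiber (u : V) : Υ ↪g trunc Γ Υ ρ where
  toFun := (u, ·)
  inj' _ _ h := (Prod.mk.inj h).2
  map_rel_iff' {i j} := by
    show (trunc Γ Υ ρ).Adj (u, i) (u, j) ↔ Υ.Adj i j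
    simp [trunc]

def IsAut.toIso {G : SimpleGraph V} {π : Equiv.Perm V} (h : IsAut G π) : G ≃g G :=
  ⟨π, h _ _⟩

theorem trunc_isAut_fst_eq_of_mem_edges (hρ : IsVNLabeling Γ ρ) {π : Equiv.Perm (V × W)}
    (hπ : IsAut (trunc Γ Υ ρ) π) (u : V) {x : W} {c : Υ.Walk x x} (hc : c.IsTrail)
    (hlen : c.length < 2 * Γ.egirth) {i j : W} (he : s(i, j) ∈ c.edges) :
    (π (u, i)).1 = (π (u, j)).1 := by
  have hc' := (hc.map (f := (truncFiber Υ ρ u).toHom) (truncFiber Υ ρ u).injective).map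
    (f := hπ.toIso.toEmbedding.toHom) hπ.toIso.injective
  refine trunc_fst_eq_of_mem_edges hρ hc' (by rwa [Walk.length_map, Walk.length_map]) ?_
  rw [Walk.edges_map, Walk.edges_map]
  exact List.mem_map_of_mem (List.mem_map_of_mem he)

theorem trunc_isAut_fst_eq (hρ : IsVNLabeling Γ ρ) (hconn : Υ.Preconnected)
    (hshort : ∀ i j : W, Υ.Adj i j → ∃ (x : W) (c : Υ.Walk x x),
      c.IsTrail ∧ s(i, j) ∈ c.edges ∧ c.length < 2 * Γ.egirth)
    {π : Equiv.Perm (V × W)} (hπ : IsAut (trunc Γ Υ ρ) π) (u : V) (i j : W) :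
    (π (u, i)).1 = (π (u, j)).1 := by
  obtain ⟨p⟩ := hconn i j
  induction p with
  | nil => rfl
  | cons hij _ ih =>
    obtain ⟨x, c, hc, he, hlen⟩ := hshort _ _ hij
    exact (trunc_isAut_fst_eq_of_mem_edges hρ hπ u hc hlen he).trans ih

variable (V W) in
def fiberPreserving : Subgroup (Equiv.Perm (V × W)) where
  carrier := {π | ∀ x y, (π x).1 = (π y).1 ↔ x.1 = y.1}
  one_mem' _ _ := Iff.rfl
  mul_mem' hπ hσ x y := (hπ _ _).trans (hσ x y)
  inv_mem' {π} hπ x y := by simpa using (hπ (π⁻¹ x) (π⁻¹ y)).symm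

theorem le_fiberPreserving {H : Subgroup (Equiv.Perm (V × W))}
    (h : ∀ π ∈ H, ∀ (u : V) (i j : W), (π (u, i)).1 = (π (u, j)).1) :
    H ≤ fiberPreserving V W := by
  rintro π hπ ⟨u, i⟩ ⟨u', j⟩
  refine ⟨fun hfst => ?_, fun (hu : u = u') => hu ▸ h π hπ u i j⟩
  have := h π⁻¹ (H.inv_mem hπ) (π (u, i)).1 (π (u, i)).2 (π (u', j)).2
  rw [Prod.mk.eta, hfst, Prod.mk.eta] at this
  simpa using this

namespace fiberPreserving

variable [Nonempty W]

noncomputable def baseFun (π : fiberPreserving V W) (u : V) : V :=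
  (π.1 (u, Classical.arbitrary W)).1

theorem fst_apply_eq_baseFun (π : fiberPreserving V W) (x : V × W) :
    (π.1 x).1 = baseFun π x.1 :=
  (π.2 x _).2 rfl

theorem baseFun_inv_baseFun (π : fiberPreserving V W) (u : V) :
    baseFun π⁻¹ (baseFun π u) = u := by
  have h : u = baseFun π⁻¹ (π.1 (u, Classical.arbitrary W)).1 := by
    simpa using fst_apply_eq_baseFun π⁻¹ (π.1 (u, Classical.arbitrary W))
  exact h.symm

noncomputable def basePerm : fiberPreserving V W →* Equiv.Perm V :=
  MonoidHom.mk'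
    (fun π => ⟨baseFun π, baseFun π⁻¹, baseFun_inv_baseFun π,
      fun u => by simpa using baseFun_inv_baseFun π⁻¹ u⟩)
    fun π σ => Equiv.ext fun u => fst_apply_eq_baseFun π (σ.1 (u, Classical.arbitrary W))

theorem fst_apply_eq_basePerm (π : fiberPreserving V W) (x : V × W) :
    (π.1 x).1 = basePerm π x.1 :=
  fst_apply_eq_baseFun π x

end fiberPreserving

open fiberPreserving

section Automorphisms

variable [Nonempty W] {π : fiberPreserving V W}

theorem trunc_adj_basePerm (hπ : π.1 ∈ autG (trunc Γ Υ ρ)) {a b : V} (hab : Γ.Adj a b) :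
    Γ.Adj (basePerm π a) (basePerm π b) := by
  have hT := (hπ (a, ρ a b hab) (b, ρ b a hab.symm)).2 (Or.inr ⟨hab, rfl, rfl⟩)
  have hne : basePerm π a ≠ basePerm π b := (basePerm π).injective.ne hab.ne
  simpa only [fst_apply_eq_basePerm] using
    (trunc_adj_of_fst_ne hT (by simpa only [fst_apply_eq_basePerm] using hne)).fst

theorem trunc_basePerm_mem_autG (hπ : π.1 ∈ autG (trunc Γ Υ ρ)) :
    basePerm π ∈ autG Γ := fun a b =>
  ⟨fun h => by simpa using trunc_adj_basePerm (π := π⁻¹) ((autG _).inv_mem hπ) h,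
    trunc_adj_basePerm hπ⟩

theorem trunc_eq_one_of_basePerm_eq_one (hρ : IsVNLabeling Γ ρ)
    (hπ : π.1 ∈ autG (trunc Γ Υ ρ)) (h1 : basePerm π = 1) : π = 1 := by
  have hfst (x : V × W) : π.1 x = (x.1, (π.1 x).2) :=
    Prod.ext (by rw [fst_apply_eq_basePerm, h1]; rfl) rfl
  refine Subtype.ext (Equiv.ext fun ⟨u, i⟩ => ?_)
  obtain ⟨w, ⟨huw, rfl⟩, -⟩ := hρ u i
  have hT := (hπ (u, ρ u w huw) (w, ρ w u huw.symm)).2 (Or.inr ⟨huw, rfl, rfl⟩)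
  rw [hfst, hfst (w, _)] at hT
  obtain ⟨_, hi, -⟩ := trunc_adj_of_fst_ne hT huw.ne
  exact (hfst _).trans (Prod.ext rfl hi)

end Automorphisms

theorem stmt3_general {V W : Type*} {g : ℕ} (Γ : SimpleGraph V) (Υ : SimpleGraph W)
    (hgirth : Γ.egirth = (g : ℕ∞))
    (ρ : ∀ u w : V, Γ.Adj u w → W) (hρ : IsVNLabeling Γ ρ)
    (hconn : Υ.Connected)
    (hshort : ∀ i j : W, Υ.Adj i j → ∃ (x : W) (c : Υ.Walk x x),
      c.IsCycle ∧ s(i, j) ∈ c.edges ∧ c.length < 2 * g) :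
    (∀ π ∈ autG (trunc Γ Υ ρ), ∀ u : V, ∃ u' : V, ∀ i : W, (π (u, i)).1 = u') ∧
    ∃ F : autG (trunc Γ Υ ρ) →* Equiv.Perm V, Function.Injective F ∧
      (∀ π : autG (trunc Γ Υ ρ), (F π : Equiv.Perm V) ∈ autG Γ) ∧
      (∀ (π : autG (trunc Γ Υ ρ)) (u : V) (i : W),
        ((π : Equiv.Perm (V × W)) (u, i)).1 = F π u) := by
  have : Nonempty W := hconn.nonempty
  have hle : autG (trunc Γ Υ ρ) ≤ fiberPreserving V W := by
    refine le_fiberPreserving fun π hπ =>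
      trunc_isAut_fst_eq hρ hconn.preconnected (fun i j hij => ?_) hπ
    obtain ⟨x, c, hc, he, hlen⟩ := hshort i j hij
    exact ⟨x, c, hc.isCircuit.isTrail, he, by rw [hgirth]; exact_mod_cast hlen⟩
  let F := basePerm.comp (Subgroup.inclusion hle)
  refine ⟨fun π hπ u =>
      ⟨basePerm ⟨π, hle hπ⟩ u, fun i => fst_apply_eq_basePerm ⟨π, hle hπ⟩ (u, i)⟩,
    F, ?_, fun π => trunc_basePerm_mem_autG π.2,
    fun π u i => fst_apply_eq_basePerm (Subgroup.inclusion hle π) (u, i)⟩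
  refine (injective_iff_map_eq_one F).2 fun π h1 => ?_
  have h := Subtype.ext_iff.mp (trunc_eq_one_of_basePerm_eq_one hρ π.2 h1)
  exact Subtype.ext h

/-- Let `Γ` be a finite `k`-regular graph of girth `g` and let
`T(Γ,ρ;Υ)` be a generalized truncation. If `Υ` is connected and each of its edges lies on
a cycle of length smaller than `2 * g`, then every automorphism of `T(Γ,ρ;Υ)` leaves the
natural partition invariant, and the whole automorphism group of `T(Γ,ρ;Υ)` projects
injectively onto a subgroup of `Aut(Γ)`. -/
theorem stmt3 {V W : Type*} [Fintype V] [Fintype W] [DecidableEq V] [DecidableEq W]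
    {k g : ℕ} (Γ : SimpleGraph V) [DecidableRel Γ.Adj] (Υ : SimpleGraph W)
    (hreg : Γ.IsRegularOfDegree k) (hcard : Fintype.card W = k)
    (hgirth : Γ.egirth = (g : ℕ∞))
    (ρ : ∀ u w : V, Γ.Adj u w → W) (hρ : IsVNLabeling Γ ρ)
    (hconn : Υ.Connected)
    (hshort : ∀ i j : W, Υ.Adj i j → ∃ (x : W) (c : Υ.Walk x x),
      c.IsCycle ∧ s(i, j) ∈ c.edges ∧ c.length < 2 * g) :
    (∀ π ∈ autG (trunc Γ Υ ρ), ∀ u : V, ∃ u' : V, ∀ i : W, (π (u, i)).1 = u') ∧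
    ∃ F : autG (trunc Γ Υ ρ) →* Equiv.Perm V, Function.Injective F ∧
      (∀ π : autG (trunc Γ Υ ρ), (F π : Equiv.Perm V) ∈ autG Γ) ∧
      (∀ (π : autG (trunc Γ Υ ρ)) (u : V) (i : W),
        ((π : Equiv.Perm (V × W)) (u, i)).1 = F π u) :=
  stmt3_general Γ Υ hgirth ρ hρ hconn hshort
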